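/- For distinct nonzero complex numbers λ₁, λ₂, the 4×4 matrix with rows (0,-1,0,-1), (-λ₂,-λ₂,-λ₁,-λ₁), (-2λ₂²,-λ₂²,-2λ₁²,-λ₁²), (-3λ₂³,-λ₂³,-3λ₁³,-λ₁³) is invertible. -/

import Mathlib

/-! The columns are `-(k λᵏ)` and `-λᵏ` for `k = 0, …, 3` at `λ = λ₂, λ₁`: up to the factor
`λ₁ λ₂` this is the confluent Vandermonde matrix with the double nodes `λ₂, λ₁`, whose determinant
is `(λ₁ - λ₂)⁴`. -/

theorem Matrix.det_confluentVandermonde_two_double_nodes {R : Type*} [CommRing R] (a b : R) :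
    (!![(0 : R), -1, 0, -1;
        -b, -b, -a, -a;
        -2*b^2, -b^2, -2*a^2, -a^2;
        -3*b^3, -b^3, -3*a^3, -a^3]).det = a * b * (a - b) ^ 4 := by
  rw [Matrix.det_succ_row_zero]
  simp [Fin.sum_univ_succ, Matrix.det_fin_three, Fin.succAbove]
  ring

theorem stmt5 (l1 l2 : ℂ) (h1 : l1 ≠ 0) (h2 : l2 ≠ 0) (h12 : l1 ≠ l2) :
    IsUnit (!![(0 : ℂ), -1, 0, -1;
               -l2, -l2, -l1, -l1;
               -2*l2^2, -l2^2, -2*l1^2, -l1^2;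
               -3*l2^3, -l2^3, -3*l1^3, -l1^3]) := by
  rw [Matrix.isUnit_iff_isUnit_det, Matrix.det_confluentVandermonde_two_double_nodes,
    isUnit_iff_ne_zero]
  exact mul_ne_zero (mul_ne_zero h1 h2) (pow_ne_zero _ (sub_ne_zero.mpr h12))
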